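/- If rank(bcirc(X_0)) = nr and the matrix bcirc(X_1 ⋆ X_0^†) is stable (spectral radius less than 1) for a right T-inverse X_0^† of X_0, then the unique tensor A satisfying X_1 = A ⋆ X_0 is stable (i.e., bcirc(A) has spectral radius less than 1). -/
import Mathlib


open Matrix Complex

/-- A third-order tensor with `s` frontal slices of size `n × m`. -/
abbrev Tensor3 (n m s : ℕ) (R : Type*) := ZMod s → Matrix (Fin n) (Fin m) R

/-- Block circulant matrix of a third-order tensor: the `(i,j)` block is slice `i - j`. -/
def bcirc {n m s : ℕ} {R : Type*} (T : Tensor3 n m s R) :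
    Matrix (ZMod s × Fin n) (ZMod s × Fin m) R :=
  fun ia jb => T (ia.1 - jb.1) ia.2 jb.2

/-- Unfold a tensor by stacking its frontal slices vertically. -/
def unfold {m r s : ℕ} {R : Type*} (S : Tensor3 m r s R) :
    Matrix (ZMod s × Fin m) (Fin r) R :=
  fun ia b => S ia.1 ia.2 b

/-- The T-product: `fold (bcirc T * unfold S)`. -/
def tProd {n m r s : ℕ} [NeZero s] (T : Tensor3 n m s ℝ) (S : Tensor3 m r s ℝ) :
    Tensor3 n r s ℝ :=
  fun k a b => (bcirc T * unfold S) (k, a) b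

/-- The T-identity tensor: first frontal slice is the identity, the rest are zero. -/
def tId {n s : ℕ} : Tensor3 n n s ℝ :=
  fun k => if k = 0 then 1 else 0

/-- The T-transpose: transpose each frontal slice and reverse the order of slices 2..s. -/
def ttrans {n m s : ℕ} {R : Type*} (T : Tensor3 n m s R) : Tensor3 m n s R :=
  fun k => (T (-k))ᵀ

/-- A real square matrix is stable if all its (complex) eigenvalues have modulus `< 1`. -/
def MStable {N : Type*} [Fintype N] [DecidableEq N] (M : Matrix N N ℝ) : Prop :=
  ∀ μ ∈ (M.map Complex.ofReal).charpoly.roots, ‖μ‖ < 1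

/-- A complex square matrix is stable if all its eigenvalues have modulus `< 1`. -/
def CStable {N : Type*} [Fintype N] [DecidableEq N] (M : Matrix N N ℂ) : Prop :=
  ∀ μ ∈ M.charpoly.roots, ‖μ‖ < 1


lemma bcirc_tProd {n m r s : ℕ} [NeZero s] (T : Tensor3 n m s ℝ) (S : Tensor3 m r s ℝ) :
    bcirc (tProd T S) = bcirc T * bcirc S := by
  ext ⟨i, a⟩ ⟨j, b⟩
  simp only [bcirc, tProd, unfold, Matrix.mul_apply, Fintype.sum_prod_type]
  refine Fintype.sum_equiv (Equiv.addRight j) _ _ fun l => ?_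
  simp only [Equiv.coe_addRight, add_sub_cancel_right]
  have : i - (l + j) = i - j - l := by ring
  rw [this]

lemma bcirc_tId {n s : ℕ} [NeZero s] : bcirc (tId : Tensor3 n n s ℝ) = 1 := by
  ext ⟨i, a⟩ ⟨j, b⟩
  simp only [bcirc, tId, Matrix.one_apply, Prod.mk.injEq, sub_eq_zero]
  split_ifs with h1 h2 h2 <;> simp_all [Matrix.one_apply, Matrix.zero_apply]

/-- if `rank (bcirc X₀) = n * r` and `bcirc (X₁ ⋆ X₀†)` is stable for a right
T-inverse `X₀†`, then the unique `A` with `X₁ = A ⋆ X₀` is stable. -/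
theorem informativity_stability {n M r : ℕ} [NeZero r]
    (X0 X1 : Tensor3 n M r ℝ) (X0d : Tensor3 M n r ℝ) (A : Tensor3 n n r ℝ)
    (hrank : (bcirc X0).rank = n * r)
    (hinv : tProd X0 X0d = tId)
    (hstab : MStable (bcirc (tProd X1 X0d)))
    (hA : X1 = tProd A X0) :
    MStable (bcirc A) := by
  have key : bcirc (tProd X1 X0d) = bcirc A := by
    rw [hA, bcirc_tProd, bcirc_tProd, Matrix.mul_assoc, ← bcirc_tProd, hinv, bcirc_tId,
      Matrix.mul_one]
  rwa [key] at hstab
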